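/- For every two nonempty finite simple graphs G and H, A(G × H) = max{A(G), A(H)}, where A denotes the ultimate categorical independence ratio and × the categorical product. -/

import Mathlib

open scoped Classical
open Filter

/-- Categorical (tensor) product of two simple graphs. -/
def tensorProd {α β : Type*} (G : SimpleGraph α) (H : SimpleGraph β) :
    SimpleGraph (α × β) where
  Adj p q := G.Adj p.1 q.1 ∧ H.Adj p.2 q.2
  symm := ⟨fun p q h => ⟨h.1.symm, h.2.symm⟩⟩
  loopless := ⟨fun p h => G.ne_of_adj h.1 rfl⟩

/-- A finset is independent. -/
def IsIndep {α : Type*} (G : SimpleGraph α) (U : Finset α) : Prop :=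
  ∀ u ∈ U, ∀ v ∈ U, ¬ G.Adj u v

/-- Neighborhood of a finset. -/
noncomputable def nbhd {α : Type*} [Fintype α] (G : SimpleGraph α) (U : Finset α) : Finset α :=
  Finset.univ.filter (fun v => ∃ u ∈ U, G.Adj u v)

/-- Independence number. -/
noncomputable def alphaNum {α : Type*} [Fintype α] (G : SimpleGraph α) : ℕ :=
  sSup {n : ℕ | ∃ U : Finset α, IsIndep G U ∧ U.card = n}

/-- Independence ratio. -/
noncomputable def iRatio {α : Type*} [Fintype α] (G : SimpleGraph α) : ℝ :=
  (alphaNum G : ℝ) / (Fintype.card α : ℝ)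

/-- a(G): the maximum of |U|/(|U|+|N(U)|) over nonempty independent sets. -/
noncomputable def aRatio {α : Type*} [Fintype α] (G : SimpleGraph α) : ℝ :=
  sSup {r : ℝ | ∃ U : Finset α, U.Nonempty ∧ IsIndep G U ∧
    r = (U.card : ℝ) / ((U.card : ℝ) + ((nbhd G U).card : ℝ))}

/-- b(G): the minimum of |N(U)|/|U| over nonempty independent sets. -/
noncomputable def bRatio {α : Type*} [Fintype α] (G : SimpleGraph α) : ℝ :=
  sInf {r : ℝ | ∃ U : Finset α, U.Nonempty ∧ IsIndep G U ∧
    r = ((nbhd G U).card : ℝ) / (U.card : ℝ)}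

/-- a*(G). -/
noncomputable def aStar {α : Type*} [Fintype α] (G : SimpleGraph α) : ℝ :=
  if aRatio G ≤ 1/2 then aRatio G else 1

/-- k-th categorical power of G. -/
def tensorPow {α : Type*} (G : SimpleGraph α) (k : ℕ) : SimpleGraph (Fin k → α) where
  Adj x y := x ≠ y ∧ ∀ i, G.Adj (x i) (y i)
  symm := ⟨fun x y h => ⟨h.1.symm, fun i => (h.2 i).symm⟩⟩
  loopless := ⟨fun x h => h.1 rfl⟩

/-- Disjoint union of two simple graphs. -/
def disjUnion {α β : Type*} (G : SimpleGraph α) (H : SimpleGraph β) :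
    SimpleGraph (α ⊕ β) where
  Adj p q := match p, q with
    | Sum.inl a, Sum.inl b => G.Adj a b
    | Sum.inr a, Sum.inr b => H.Adj a b
    | _, _ => False
  symm := ⟨by rintro (a|a) (b|b) h <;> simp_all <;> exact h.symm⟩
  loopless := ⟨by rintro (a|a) h <;> simp_all⟩

/-!
Write `N(U)` for the neighbourhood of an independent set `U` and `b(K) = min |N(U)| / |U|`, so
that `a(K) = 1 / (1 + b(K))`, and `a*(K)` is `1 / (1 + b(K))` if `b(K) ≥ 1` and `1` otherwise.

The heart of the proof: if every independent set of `G` and of `H` expands by a factor `c ≥ 1`,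
so does every independent set `U` of `G × H`. The neighbourhood of `U` is obtained by replacing
each row of `U` by its neighbourhood in `H` and then each column of the result by its
neighbourhood in `G`; the inequality `|R ∩ N(R)| + c |R \ N(R)| ≤ |N(R)|`, valid for every set
`R`, applied to rows and to columns adds up to `c |U| ≤ |N(U)|`, independence of `U` being used to
compare the two error terms. Together with the easy bound `b(G × H) ≤ min (b(G), b(H))` this gives
`a*(G × H) = max (a*(G), a*(H))`.

It remains to show `α(K^k) / |K|^k → a*(K)`. Expansion passes to powers, which bounds the ratio
above by `1 / (1 + b(K))` when `b(K) ≥ 1`. From below, an extremal `U` and the set `W` of vertices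
outside `U ∪ N(U)` give independent sets `U × V(K)^(k-1) ∪ W × I` in `K^k`, with `I` a maximum
independent set of `K^(k-1)`, whence a lower bound
converging to `|U| / (|U| + |N(U)|)`; and if `|N(U)| < |U|`, the vectors with more coordinates in
`U` than in `N(U)` form an independent set of `K^k` whose complement is exponentially small by a
Chernoff-type bound.
-/

open Finset

lemma isIndep_singleton {γ : Type*} (G : SimpleGraph γ) (v : γ) : IsIndep G {v} := by
  simp [IsIndep]

section Basic
variable {γ : Type*} [Fintype γ] {G : SimpleGraph γ} {U : Finset γ}

lemma mem_nbhd {v : γ} : v ∈ nbhd G U ↔ ∃ u ∈ U, G.Adj u v := by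
  simp [nbhd]

lemma nbhd_mono {V : Finset γ} (h : U ⊆ V) : nbhd G U ⊆ nbhd G V := fun _ hv =>
  let ⟨u, hu, huv⟩ := mem_nbhd.1 hv
  mem_nbhd.2 ⟨u, h hu, huv⟩

lemma IsIndep.disjoint_nbhd (h : IsIndep G U) : Disjoint U (nbhd G U) :=
  disjoint_left.2 fun {v} hv hN =>
    let ⟨u, hu, huv⟩ := mem_nbhd.1 hN
    h u hu v hv huv

lemma IsIndep.card_add_card_nbhd_le (h : IsIndep G U) : #U + #(nbhd G U) ≤ Fintype.card γ := by
  rw [← card_union_of_disjoint h.disjoint_nbhd]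
  exact card_le_univ _

lemma IsIndep.card_add_card_nbhd_add_card_compl (h : IsIndep G U) :
    #U + #(nbhd G U) + #(U ∪ nbhd G U)ᶜ = Fintype.card γ := by
  rw [← card_union_of_disjoint h.disjoint_nbhd, add_comm, card_compl_add_card]

lemma bddAbove_indepCards (G : SimpleGraph γ) :
    BddAbove {n : ℕ | ∃ U : Finset γ, IsIndep G U ∧ #U = n} :=
  ⟨Fintype.card γ, by rintro _ ⟨U, -, rfl⟩; exact card_le_univ U⟩

lemma IsIndep.card_le_alphaNum (h : IsIndep G U) : #U ≤ alphaNum G :=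
  le_csSup (bddAbove_indepCards G) ⟨U, h, rfl⟩

lemma exists_isIndep_card_eq_alphaNum (G : SimpleGraph γ) :
    ∃ U : Finset γ, IsIndep G U ∧ #U = alphaNum G := by
  refine Nat.sSup_mem ?_ (bddAbove_indepCards G)
  exact ⟨0, ∅, by simp [IsIndep], rfl⟩

lemma alphaNum_le_card (G : SimpleGraph γ) : alphaNum G ≤ Fintype.card γ := by
  obtain ⟨U, -, hU⟩ := exists_isIndep_card_eq_alphaNum G
  exact hU ▸ card_le_univ U

lemma iRatio_le_one [Nonempty γ] (G : SimpleGraph γ) : iRatio G ≤ 1 :=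
  div_le_one_of_le₀ (by exact_mod_cast alphaNum_le_card G) (by positivity)

lemma iRatio_tensorPow (G : SimpleGraph γ) (m : ℕ) :
    iRatio (tensorPow G m) = alphaNum (tensorPow G m) / (Fintype.card γ : ℝ) ^ m := by
  simp [iRatio]

end Basic

section Ratios
variable {γ : Type*} [Fintype γ] {G : SimpleGraph γ} {U : Finset γ} {c : ℝ}

lemma finite_bRatioSet (G : SimpleGraph γ) :
    {r : ℝ | ∃ U : Finset γ, U.Nonempty ∧ IsIndep G U ∧
      r = (#(nbhd G U) : ℝ) / #U}.Finite :=
  (Set.finite_range fun U : Finset γ => (#(nbhd G U) : ℝ) / #U).subset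
    (by rintro _ ⟨U, -, -, rfl⟩; exact ⟨U, rfl⟩)

lemma finite_aRatioSet (G : SimpleGraph γ) :
    {r : ℝ | ∃ U : Finset γ, U.Nonempty ∧ IsIndep G U ∧
      r = (#U : ℝ) / (#U + #(nbhd G U))}.Finite :=
  (Set.finite_range fun U : Finset γ => (#U : ℝ) / (#U + #(nbhd G U))).subset
    (by rintro _ ⟨U, -, -, rfl⟩; exact ⟨U, rfl⟩)

lemma bRatio_le (hne : U.Nonempty) (hU : IsIndep G U) :
    bRatio G ≤ (#(nbhd G U) : ℝ) / #U :=
  csInf_le (finite_bRatioSet G).bddBelow ⟨U, hne, hU, rfl⟩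

lemma le_aRatio (hne : U.Nonempty) (hU : IsIndep G U) :
    (#U : ℝ) / (#U + #(nbhd G U)) ≤ aRatio G :=
  le_csSup (finite_aRatioSet G).bddAbove ⟨U, hne, hU, rfl⟩

lemma exists_bRatio_eq [Nonempty γ] (G : SimpleGraph γ) :
    ∃ U : Finset γ, U.Nonempty ∧ IsIndep G U ∧ bRatio G = (#(nbhd G U) : ℝ) / #U := by
  refine Set.Nonempty.csInf_mem ?_ (finite_bRatioSet G)
  exact ⟨_, {Classical.arbitrary γ}, singleton_nonempty _, isIndep_singleton G _, rfl⟩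

lemma exists_aRatio_eq [Nonempty γ] (G : SimpleGraph γ) :
    ∃ U : Finset γ, U.Nonempty ∧ IsIndep G U ∧ aRatio G = (#U : ℝ) / (#U + #(nbhd G U)) := by
  refine Set.Nonempty.csSup_mem ?_ (finite_aRatioSet G)
  exact ⟨_, {Classical.arbitrary γ}, singleton_nonempty _, isIndep_singleton G _, rfl⟩

lemma bRatio_nonneg [Nonempty γ] (G : SimpleGraph γ) : 0 ≤ bRatio G := by
  obtain ⟨U, -, -, hb⟩ := exists_bRatio_eq G
  rw [hb]
  positivity

lemma div_add_eq_inv_one_add_div {u q : ℝ} (hu : u ≠ 0) : u / (u + q) = (1 + q / u)⁻¹ := by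
  rw [one_add_div hu, inv_div]

lemma aRatio_eq_inv_one_add_bRatio [Nonempty γ] (G : SimpleGraph γ) :
    aRatio G = (1 + bRatio G)⁻¹ := by
  apply le_antisymm
  · obtain ⟨U, hne, hU, ha⟩ := exists_aRatio_eq G
    rw [ha, div_add_eq_inv_one_add_div (Nat.cast_pos.2 hne.card_pos).ne']
    gcongr
    · linarith [bRatio_nonneg G]
    · exact bRatio_le hne hU
  · obtain ⟨U, hne, hU, hb⟩ := exists_bRatio_eq G
    rw [hb, ← div_add_eq_inv_one_add_div (Nat.cast_pos.2 hne.card_pos).ne']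
    exact le_aRatio hne hU

def Expands (G : SimpleGraph γ) (c : ℝ) : Prop :=
  ∀ U : Finset γ, IsIndep G U → c * #U ≤ #(nbhd G U)

lemma le_bRatio_iff_expands [Nonempty γ] : c ≤ bRatio G ↔ Expands G c := by
  constructor
  · intro hc U hU
    obtain rfl | hne := U.eq_empty_or_nonempty
    · simp
    · rw [← le_div_iff₀ (by exact_mod_cast hne.card_pos)]
      exact hc.trans (bRatio_le hne hU)
  · intro hc
    obtain ⟨U, hne, hU, hb⟩ := exists_bRatio_eq G
    rw [hb, le_div_iff₀ (by exact_mod_cast hne.card_pos)]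
    exact hc U hU

lemma Expands.one_add_mul_alphaNum_le_card (h : Expands G c) :
    (1 + c) * alphaNum G ≤ Fintype.card γ := by
  obtain ⟨U, hU, hcard⟩ := exists_isIndep_card_eq_alphaNum G
  have hsum : (#U : ℝ) + #(nbhd G U) ≤ Fintype.card γ := by
    exact_mod_cast hU.card_add_card_nbhd_le
  rw [← hcard]
  linarith [h U hU]

lemma Expands.card_inter_add_mul_card_sdiff_le (h : Expands G c) (R : Finset γ) :
    #(R ∩ nbhd G R) + c * #(R \ nbhd G R) ≤ (#(nbhd G R) : ℝ) := by
  have hI : IsIndep G (R \ nbhd G R) := fun u hu v hv huv =>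
    (mem_sdiff.1 hv).2 (mem_nbhd.2 ⟨u, (mem_sdiff.1 hu).1, huv⟩)
  have hdisj : Disjoint (R ∩ nbhd G R) (nbhd G (R \ nbhd G R)) := by
    refine disjoint_left.2 fun {v} hv hvN => ?_
    obtain ⟨u, hu, huv⟩ := mem_nbhd.1 hvN
    exact (mem_sdiff.1 hu).2 (mem_nbhd.2 ⟨v, (mem_inter.1 hv).1, huv.symm⟩)
  have hsub : (R ∩ nbhd G R) ∪ nbhd G (R \ nbhd G R) ⊆ nbhd G R :=
    union_subset inter_subset_right (nbhd_mono sdiff_subset)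
  have hcard : (#(R ∩ nbhd G R) : ℝ) + #(nbhd G (R \ nbhd G R)) ≤ #(nbhd G R) := by
    rw [← Nat.cast_add, ← card_union_of_disjoint hdisj]
    exact_mod_cast card_le_card hsub
  linarith [h _ hI]

end Ratios

lemma IsIndep.map {γ δ : Type*} {G : SimpleGraph γ} {G' : SimpleGraph δ} (e : G ≃g G')
    {U : Finset γ} (h : IsIndep G U) : IsIndep G' (U.map e.toEmbedding.toEmbedding) := by
  simp only [IsIndep, Finset.mem_map]
  rintro _ ⟨u, hu, rfl⟩ _ ⟨v, hv, rfl⟩ huv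
  exact h u hu v hv (e.map_adj_iff.1 huv)

section Iso
variable {γ δ : Type*} [Fintype γ] [Fintype δ] {G : SimpleGraph γ} {G' : SimpleGraph δ} {c : ℝ}

lemma nbhd_map (e : G ≃g G') (U : Finset γ) :
    nbhd G' (U.map e.toEmbedding.toEmbedding) = (nbhd G U).map e.toEmbedding.toEmbedding := by
  ext v
  obtain ⟨v, rfl⟩ := e.surjective v
  simp only [mem_nbhd, Finset.mem_map, exists_exists_and_eq_and, Function.Embedding.coeFn_mk,
    RelIso.coe_fn_toEquiv, EmbeddingLike.apply_eq_iff_eq, exists_eq_right]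
  exact exists_congr fun _ => and_congr_right fun _ => e.map_adj_iff

lemma alphaNum_le_of_iso (e : G ≃g G') : alphaNum G ≤ alphaNum G' := by
  obtain ⟨U, hU, hcard⟩ := exists_isIndep_card_eq_alphaNum G
  rw [← hcard, ← card_map e.toEmbedding.toEmbedding]
  exact (hU.map e).card_le_alphaNum

lemma Expands.of_iso (e : G ≃g G') (h : Expands G' c) : Expands G c := by
  intro U hU
  have := h _ (hU.map e)
  rwa [nbhd_map, card_map, card_map] at this

end Iso

section TensorProd
variable {α β : Type*}

@[simp]
lemma tensorProd_adj {G : SimpleGraph α} {H : SimpleGraph β} {p q : α × β} :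
    (tensorProd G H).Adj p q ↔ G.Adj p.1 q.1 ∧ H.Adj p.2 q.2 :=
  Iff.rfl

def tensorProdComm (G : SimpleGraph α) (H : SimpleGraph β) :
    tensorProd G H ≃g tensorProd H G where
  toEquiv := Equiv.prodComm α β
  map_rel_iff' := and_comm

lemma IsIndep.product_univ [Fintype β] {G : SimpleGraph α} {H : SimpleGraph β} {U : Finset α}
    (hU : IsIndep G U) : IsIndep (tensorProd G H) (U ×ˢ univ) := by
  simp only [IsIndep, mem_product, mem_univ, and_true, tensorProd_adj, not_and]
  exact fun p hp q hq hpq => absurd hpq (hU _ hp _ hq)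

variable [Fintype α] [Fintype β] {G : SimpleGraph α} {H : SimpleGraph β} {U : Finset α}

lemma nbhd_product_univ : nbhd (tensorProd G H) (U ×ˢ univ) = nbhd G U ×ˢ nbhd H univ := by
  ext ⟨x, y⟩
  simp only [mem_nbhd, mem_product, mem_univ, and_true, true_and, tensorProd_adj, Prod.exists]
  exact ⟨fun ⟨a, b, ha, hax, hby⟩ => ⟨⟨a, ha, hax⟩, b, hby⟩,
    fun ⟨⟨a, ha, hax⟩, b, hby⟩ => ⟨a, b, ha, hax, hby⟩⟩

lemma bRatio_le_of_iso {γ δ : Type*} [Fintype γ] [Fintype δ] [Nonempty γ] [Nonempty δ]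
    {K : SimpleGraph γ} {K' : SimpleGraph δ} (e : K ≃g K') : bRatio K' ≤ bRatio K :=
  le_bRatio_iff_expands.2 ((le_bRatio_iff_expands.1 le_rfl).of_iso e)

variable [Nonempty α] [Nonempty β]

lemma bRatio_tensorProd_le_left : bRatio (tensorProd G H) ≤ bRatio G := by
  obtain ⟨U, hne, hU, hb⟩ := exists_bRatio_eq G
  have hle := bRatio_le (hne.product univ_nonempty) (hU.product_univ (H := H))
  rw [nbhd_product_univ, card_product, card_product, Nat.cast_mul, Nat.cast_mul,
    mul_div_mul_comm] at hle
  rw [hb]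
  refine hle.trans (mul_le_of_le_one_right (by positivity) ?_)
  exact div_le_one_of_le₀ (by exact_mod_cast card_le_univ _) (by positivity)

lemma bRatio_tensorProd_le_right : bRatio (tensorProd G H) ≤ bRatio H :=
  (bRatio_le_of_iso (tensorProdComm H G)).trans bRatio_tensorProd_le_left

end TensorProd

noncomputable def rowSlice {α β : Type*} [Fintype β] (T : Finset (α × β)) (x : α) : Finset β :=
  {y | (x, y) ∈ T}

noncomputable def colSlice {α β : Type*} [Fintype α] (T : Finset (α × β)) (y : β) : Finset α :=
  {x | (x, y) ∈ T}

@[simp]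
lemma mem_rowSlice {α β : Type*} [Fintype β] {T : Finset (α × β)} {x : α} {y : β} :
    y ∈ rowSlice T x ↔ (x, y) ∈ T := by
  simp [rowSlice]

@[simp]
lemma mem_colSlice {α β : Type*} [Fintype α] {T : Finset (α × β)} {x : α} {y : β} :
    x ∈ colSlice T y ↔ (x, y) ∈ T := by
  simp [colSlice]

@[simp]
lemma rowSlice_inter {α β : Type*} [Fintype β] (T T' : Finset (α × β)) (x : α) :
    rowSlice (T ∩ T') x = rowSlice T x ∩ rowSlice T' x := by
  ext; simp

@[simp]
lemma colSlice_inter {α β : Type*} [Fintype α] (T T' : Finset (α × β)) (y : β) :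
    colSlice (T ∩ T') y = colSlice T y ∩ colSlice T' y := by
  ext; simp

section Slices
variable {α β : Type*} [Fintype α] [Fintype β]

lemma sum_card_rowSlice (T : Finset (α × β)) : ∑ x, #(rowSlice T x) = #T := by
  simp only [rowSlice, card_filter]
  rw [← Fintype.sum_prod_type' (fun x y => if (x, y) ∈ T then 1 else 0), ← card_filter]
  simp

lemma sum_card_colSlice (T : Finset (α × β)) : ∑ y, #(colSlice T y) = #T := by
  simp only [colSlice, card_filter]
  rw [← Fintype.sum_prod_type_right' (fun x y => if (x, y) ∈ T then 1 else 0), ← card_filter]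
  simp

variable {G : SimpleGraph α} {H : SimpleGraph β} {c : ℝ}

noncomputable def rowNbhd (H : SimpleGraph β) (U : Finset (α × β)) : Finset (α × β) :=
  {p | p.2 ∈ nbhd H (rowSlice U p.1)}

lemma rowSlice_rowNbhd (U : Finset (α × β)) (x : α) :
    rowSlice (rowNbhd H U) x = nbhd H (rowSlice U x) := by
  ext; simp [rowNbhd]

lemma colSlice_nbhd_tensorProd (U : Finset (α × β)) (y : β) :
    colSlice (nbhd (tensorProd G H) U) y = nbhd G (colSlice (rowNbhd H U) y) := by
  ext x
  simp only [mem_colSlice, mem_nbhd, tensorProd_adj, Prod.exists, rowNbhd, mem_filter, mem_univ,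
    true_and, mem_rowSlice]
  exact ⟨fun ⟨a, b, h, ha, hb⟩ => ⟨a, ⟨b, h, hb⟩, ha⟩, fun ⟨a, ⟨b, h, hb⟩, ha⟩ => ⟨a, b, h, ha, hb⟩⟩

lemma IsIndep.colSlice_inter_subset {U : Finset (α × β)} (hU : IsIndep (tensorProd G H) U)
    (y : β) : colSlice U y ∩ colSlice (rowNbhd H U) y ⊆
      colSlice (rowNbhd H U) y \ nbhd G (colSlice (rowNbhd H U) y) := by
  intro x hx
  obtain ⟨hxU, hxS⟩ := mem_inter.1 hx
  refine mem_sdiff.2 ⟨hxS, fun hxN => ?_⟩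
  obtain ⟨x', hx'S, hx'x⟩ := mem_nbhd.1 hxN
  obtain ⟨y', hy'R, hy'y⟩ := mem_nbhd.1 ((mem_filter.1 (mem_colSlice.1 hx'S)).2)
  exact hU _ (mem_rowSlice.1 hy'R) _ (mem_colSlice.1 hxU) ⟨hx'x, hy'y⟩

theorem expands_tensorProd (hc : 1 ≤ c) (hG : Expands G c) (hH : Expands H c) :
    Expands (tensorProd G H) c := by
  intro U hU
  set R := rowSlice U
  set S := colSlice (rowNbhd H U)
  set A := ∑ x, (#(R x ∩ nbhd H (R x)) : ℝ)
  set A' := ∑ x, (#(R x \ nbhd H (R x)) : ℝ)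
  set B := ∑ y, (#(S y ∩ nbhd G (S y)) : ℝ)
  set B' := ∑ y, (#(S y \ nbhd G (S y)) : ℝ)
  have hU_eq : (#U : ℝ) = A + A' := by
    rw [← sum_card_rowSlice, Nat.cast_sum, ← sum_add_distrib]
    exact_mod_cast sum_congr rfl fun x _ => (card_inter_add_card_sdiff _ _).symm
  have hT_eq : (#(rowNbhd H U) : ℝ) = B + B' := by
    rw [← sum_card_colSlice, Nat.cast_sum, ← sum_add_distrib]
    exact_mod_cast sum_congr rfl fun y _ => (card_inter_add_card_sdiff _ _).symm
  have hrows : A + c * A' ≤ #(rowNbhd H U) := by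
    rw [← sum_card_rowSlice, Nat.cast_sum, mul_sum, ← sum_add_distrib]
    exact sum_le_sum fun x _ => rowSlice_rowNbhd U x ▸ hH.card_inter_add_mul_card_sdiff_le (R x)
  have hcols : B + c * B' ≤ #(nbhd (tensorProd G H) U) := by
    rw [← sum_card_colSlice, Nat.cast_sum, mul_sum, ← sum_add_distrib]
    exact sum_le_sum fun y _ =>
      colSlice_nbhd_tensorProd U y ▸ hG.card_inter_add_mul_card_sdiff_le (S y)
  have hAB : A ≤ B' := by
    have hdc := sum_card_rowSlice (U ∩ rowNbhd H U)
    rw [← sum_card_colSlice] at hdc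
    simp only [rowSlice_inter, colSlice_inter, rowSlice_rowNbhd] at hdc
    calc A = ∑ y, (#(colSlice U y ∩ S y) : ℝ) := by simp only [A]; exact_mod_cast hdc
      _ ≤ B' := sum_le_sum fun y _ => by exact_mod_cast card_le_card (hU.colSlice_inter_subset y)
  calc c * #U = (c - 1) * A + (A + c * A') := by rw [hU_eq]; ring
    _ ≤ (c - 1) * B' + (B + B') :=
        add_le_add (mul_le_mul_of_nonneg_left hAB (by linarith)) (hrows.trans hT_eq.le)
    _ = B + c * B' := by ring
    _ ≤ #(nbhd (tensorProd G H) U) := hcols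

end Slices

lemma min_bRatio_le_bRatio_tensorProd {α β : Type*} [Fintype α] [Fintype β] [Nonempty α]
    [Nonempty β] {G : SimpleGraph α} {H : SimpleGraph β} (h : 1 ≤ min (bRatio G) (bRatio H)) :
    min (bRatio G) (bRatio H) ≤ bRatio (tensorProd G H) :=
  le_bRatio_iff_expands.2 <| expands_tensorProd h (le_bRatio_iff_expands.1 (min_le_left _ _))
    (le_bRatio_iff_expands.1 (min_le_right _ _))


noncomputable def aStarOfBRatio (b : ℝ) : ℝ := if 1 ≤ b then (1 + b)⁻¹ else 1

lemma aStarOfBRatio_le_one (b : ℝ) : aStarOfBRatio b ≤ 1 := by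
  unfold aStarOfBRatio
  split_ifs with hb
  · exact inv_le_one_of_one_le₀ (by linarith)
  · exact le_rfl

lemma antitone_aStarOfBRatio : Antitone aStarOfBRatio := by
  intro b b' hbb'
  by_cases hb : 1 ≤ b
  · rw [aStarOfBRatio, aStarOfBRatio, if_pos hb, if_pos (hb.trans hbb')]
    gcongr
  · calc aStarOfBRatio b' ≤ 1 := aStarOfBRatio_le_one b'
      _ = aStarOfBRatio b := (if_neg hb).symm

section AStar
variable {α β γ : Type*} [Fintype α] [Fintype β] [Fintype γ] [Nonempty α] [Nonempty β] [Nonempty γ]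

lemma aStar_eq_aStarOfBRatio (K : SimpleGraph γ) : aStar K = aStarOfBRatio (bRatio K) := by
  have hb := bRatio_nonneg K
  have hhalf : (1 + bRatio K)⁻¹ ≤ 1 / 2 ↔ 1 ≤ bRatio K := by
    rw [one_div, inv_le_inv₀ (by linarith) (by norm_num)]
    constructor <;> intro <;> linarith
  rw [aStar, aStarOfBRatio, aRatio_eq_inv_one_add_bRatio]
  exact if_congr hhalf rfl rfl


theorem aStar_tensorProd (G : SimpleGraph α) (H : SimpleGraph β) :
    aStar (tensorProd G H) = max (aStar G) (aStar H) := by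
  simp only [aStar_eq_aStarOfBRatio, ← antitone_aStarOfBRatio.map_min]
  refine le_antisymm ?_
    (antitone_aStarOfBRatio (le_min bRatio_tensorProd_le_left bRatio_tensorProd_le_right))
  by_cases h : 1 ≤ min (bRatio G) (bRatio H)
  · exact antitone_aStarOfBRatio (min_bRatio_le_bRatio_tensorProd h)
  · exact (aStarOfBRatio_le_one _).trans_eq (if_neg h).symm

end AStar

def tensorPowOneIso {γ : Type*} (K : SimpleGraph γ) : K ≃g tensorPow K 1 where
  toEquiv := (Equiv.funUnique (Fin 1) γ).symm
  map_rel_iff' {a b} :=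
    ⟨fun h => h.2 0, fun h => ⟨fun hab => h.ne (by simpa using congrFun hab 0), fun _ => h⟩⟩

def tensorPowSuccIso {γ : Type*} (K : SimpleGraph γ) (m : ℕ) :
    tensorProd K (tensorPow K (m + 1)) ≃g tensorPow K (m + 2) where
  toEquiv := Fin.consEquiv fun _ => γ
  map_rel_iff' {a b} := by
    obtain ⟨x, xs⟩ := a
    obtain ⟨y, ys⟩ := b
    simp only [tensorPow, tensorProd_adj, Fin.consEquiv_apply]
    refine ⟨fun ⟨_, h⟩ => ⟨h 0, fun hxy => (h 1).ne (by simp [hxy]), fun i => h i.succ⟩,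
      fun ⟨h0, _, h⟩ => ⟨fun hxy => h0.ne (by simpa using congrFun hxy 0), Fin.cases h0 h⟩⟩

lemma expands_tensorPow {γ : Type*} [Fintype γ] {K : SimpleGraph γ} {c : ℝ} (hc : 1 ≤ c)
    (h : Expands K c) : ∀ k, Expands (tensorPow K (k + 1)) c
  | 0 => h.of_iso (tensorPowOneIso K).symm
  | k + 1 => (expands_tensorProd hc h (expands_tensorPow hc h k)).of_iso (tensorPowSuccIso K k).symm

section UpperBound
variable {γ : Type*} [Fintype γ] [Nonempty γ]

lemma iRatio_tensorPow_le_aStar (K : SimpleGraph γ) (k : ℕ) :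
    iRatio (tensorPow K (k + 1)) ≤ aStar K := by
  rw [aStar_eq_aStarOfBRatio, aStarOfBRatio]
  split_ifs with hb
  · have := (expands_tensorPow hb (le_bRatio_iff_expands.1 le_rfl) k).one_add_mul_alphaNum_le_card
    rw [iRatio, div_le_iff₀ (by positivity), inv_mul_eq_div, le_div_iff₀ (by positivity)]
    linarith
  · exact iRatio_le_one _

end UpperBound

section Mixing
variable {α β : Type*} [Fintype α] [Fintype β] {G : SimpleGraph α} {U : Finset α}

lemma IsIndep.card_mul_add_card_mul_alphaNum_le (hU : IsIndep G U) (H : SimpleGraph β) :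
    #U * Fintype.card β + #(U ∪ nbhd G U)ᶜ * alphaNum H ≤ alphaNum (tensorProd G H) := by
  obtain ⟨V, hV, hVcard⟩ := exists_isIndep_card_eq_alphaNum H
  have hdisj : Disjoint (U ×ˢ (univ : Finset β)) ((U ∪ nbhd G U)ᶜ ×ˢ V) :=
    disjoint_product.2 (.inl (disjoint_compl_right.mono_right (compl_le_compl subset_union_left)))
  have hI : IsIndep (tensorProd G H) (U ×ˢ univ ∪ (U ∪ nbhd G U)ᶜ ×ˢ V) := by
    simp only [IsIndep, mem_union, mem_product, mem_univ, and_true, mem_compl, not_or,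
      tensorProd_adj, not_and]
    rintro ⟨a, b⟩ hab ⟨a', b'⟩ hab' haa'
    rcases hab with ha | ⟨⟨-, ha⟩, hb⟩ <;> rcases hab' with ha' | ⟨⟨-, ha'⟩, hb'⟩
    · exact absurd haa' (hU _ ha _ ha')
    · exact absurd (mem_nbhd.2 ⟨a, ha, haa'⟩) ha'
    · exact absurd (mem_nbhd.2 ⟨a', ha', haa'.symm⟩) ha
    · exact hV _ hb _ hb'
  have := hI.card_le_alphaNum
  rwa [card_union_of_disjoint hdisj, card_product, card_product, card_univ, hVcard] at this

end Mixing

lemma mul_sub_pow_le_of_le_add_mul {a : ℕ → ℝ} {u w n r : ℝ} (hw : 0 ≤ w)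
    (hr : r * (n - w) = u) (h0 : u ≤ a 0)
    (hsucc : ∀ k, u * n ^ (k + 1) + w * a k ≤ a (k + 1)) (k : ℕ) :
    r * (n ^ (k + 1) - w ^ (k + 1)) ≤ a k := by
  induction k with
  | zero => simpa [hr] using h0
  | succ k ih =>
    calc r * (n ^ (k + 2) - w ^ (k + 2))
        = u * n ^ (k + 1) + w * (r * (n ^ (k + 1) - w ^ (k + 1))) := by rw [← hr]; ring
      _ ≤ u * n ^ (k + 1) + w * a k := by gcongr
      _ ≤ a (k + 1) := hsucc k

section LowerBound
variable {γ : Type*} [Fintype γ] {K : SimpleGraph γ} {U : Finset γ}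

lemma IsIndep.le_alphaNum_tensorPow (hU : IsIndep K U) (k : ℕ) :
    (#U : ℝ) / (#U + #(nbhd K U)) *
        ((Fintype.card γ : ℝ) ^ (k + 1) - (#(U ∪ nbhd K U)ᶜ : ℝ) ^ (k + 1)) ≤
      alphaNum (tensorPow K (k + 1)) := by
  refine mul_sub_pow_le_of_le_add_mul (u := #U)
    (a := fun k => (alphaNum (tensorPow K (k + 1)) : ℝ))
    ?_ ?_ ?_ (fun k => ?_) k
  · positivity
  · have hn : (Fintype.card γ : ℝ) = #U + #(nbhd K U) + #(U ∪ nbhd K U)ᶜ := by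
      exact_mod_cast hU.card_add_card_nbhd_add_card_compl.symm
    rw [hn, add_sub_cancel_right]
    refine div_mul_cancel_of_imp fun h => ?_
    linarith [show (0 : ℝ) ≤ #U by positivity, show (0 : ℝ) ≤ #(nbhd K U) by positivity]
  · exact_mod_cast hU.card_le_alphaNum.trans (alphaNum_le_of_iso (tensorPowOneIso K))
  · have hmix := (hU.card_mul_add_card_mul_alphaNum_le (tensorPow K (k + 1))).trans
      (alphaNum_le_of_iso (tensorPowSuccIso K k))
    rw [Fintype.card_fun, Fintype.card_fin] at hmix
    exact_mod_cast hmix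

end LowerBound

section Majority
variable {γ : Type*} [Fintype γ]

lemma card_filter_one_le_prod_le_pow (g : γ → ℝ) (hg : ∀ a, 0 ≤ g a) (m : ℕ) :
    (#{x : Fin m → γ | 1 ≤ ∏ i, g (x i)} : ℝ) ≤ (∑ a, g a) ^ m := by
  rw [← Fin.prod_const, Fintype.prod_sum]
  calc (#{x : Fin m → γ | 1 ≤ ∏ i, g (x i)} : ℝ)
      = ∑ x ∈ {x : Fin m → γ | 1 ≤ ∏ i, g (x i)}, 1 := by simp
    _ ≤ ∑ x ∈ {x : Fin m → γ | 1 ≤ ∏ i, g (x i)}, ∏ i, g (x i) :=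
        sum_le_sum fun x hx => (mem_filter.1 hx).2
    _ ≤ ∑ x : Fin m → γ, ∏ i, g (x i) :=
        sum_le_sum_of_subset_of_nonneg (filter_subset _ _) fun x _ _ => prod_nonneg fun i _ => hg _

/-- Chernoff-type bound: weight the points of `U` by `t⁻¹` and those of `N` by `t`. -/
lemma card_filter_card_le_card_le_pow {U N : Finset γ} (hUN : Disjoint U N) {t : ℝ} (ht : 1 ≤ t)
    (m : ℕ) :
    (#{x : Fin m → γ | #{i | x i ∈ U} ≤ #{i | x i ∈ N}} : ℝ) ≤
      (#U * t⁻¹ + #N * t + #(U ∪ N)ᶜ) ^ m := by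
  set g : γ → ℝ := fun a => t⁻¹ ^ (if a ∈ U then 1 else 0) * t ^ (if a ∈ N then 1 else 0)
  have hprod (x : Fin m → γ) : ∏ i, g (x i) = t⁻¹ ^ #{i | x i ∈ U} * t ^ #{i | x i ∈ N} := by
    simp only [g, prod_mul_distrib, prod_pow_eq_pow_sum, sum_boole, Nat.cast_id]
  have hsum : ∑ a, g a = #U * t⁻¹ + #N * t + #(U ∪ N)ᶜ := by
    have hgU : ∀ a ∈ U, g a = t⁻¹ := fun a ha => by simp [g, ha, disjoint_left.1 hUN ha]
    have hgN : ∀ a ∈ N, g a = t := fun a ha => by simp [g, ha, disjoint_right.1 hUN ha]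
    have hgc : ∀ a ∈ (U ∪ N)ᶜ, g a = 1 := fun a ha => by
      simp only [mem_compl, mem_union, not_or] at ha
      simp [g, ha.1, ha.2]
    rw [← sum_add_sum_compl (U ∪ N) g, sum_union hUN, sum_congr rfl hgU, sum_congr rfl hgN,
      sum_congr rfl hgc]
    simp
  refine le_trans ?_ (hsum ▸ card_filter_one_le_prod_le_pow g (fun a => by positivity) m)
  gcongr with x
  rw [hprod]
  intro hx
  calc 1 = t⁻¹ ^ #{i | x i ∈ U} * t ^ #{i | x i ∈ U} := by
        rw [inv_pow, inv_mul_cancel₀ (by positivity)]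
    _ ≤ t⁻¹ ^ #{i | x i ∈ U} * t ^ #{i | x i ∈ N} := by gcongr

lemma isIndep_majority (K : SimpleGraph γ) (U : Finset γ) (m : ℕ) :
    IsIndep (tensorPow K m) {x | #{i | x i ∈ nbhd K U} < #{i | x i ∈ U}} := by
  intro x hx y hy ⟨_, hxy⟩
  simp only [mem_filter, mem_univ, true_and] at hx hy
  have hxU : #{i | x i ∈ U} ≤ #{i | y i ∈ nbhd K U} :=
    card_le_card fun i hi => by simpa using mem_nbhd.2 ⟨x i, (mem_filter.1 hi).2, hxy i⟩
  have hyU : #{i | y i ∈ U} ≤ #{i | x i ∈ nbhd K U} :=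
    card_le_card fun i hi => by simpa using mem_nbhd.2 ⟨y i, (mem_filter.1 hi).2, (hxy i).symm⟩
  omega

lemma IsIndep.card_pow_sub_le_alphaNum_tensorPow {K : SimpleGraph γ} {U : Finset γ}
    (hU : IsIndep K U) {t : ℝ} (ht : 1 ≤ t) (m : ℕ) :
    (Fintype.card γ : ℝ) ^ m - (#U * t⁻¹ + #(nbhd K U) * t + #(U ∪ nbhd K U)ᶜ) ^ m ≤
      alphaNum (tensorPow K m) := by
  have hmaj : (#{x : Fin m → γ | #{i | x i ∈ nbhd K U} < #{i | x i ∈ U}} : ℝ) ≤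
      alphaNum (tensorPow K m) := by exact_mod_cast (isIndep_majority K U m).card_le_alphaNum
  have hsplit : (#{x : Fin m → γ | #{i | x i ∈ nbhd K U} < #{i | x i ∈ U}} : ℝ) +
      #{x : Fin m → γ | #{i | x i ∈ U} ≤ #{i | x i ∈ nbhd K U}} = (Fintype.card γ : ℝ) ^ m := by
    have := card_filter_add_card_filter_not
      (s := (univ : Finset (Fin m → γ))) fun x => #{i | x i ∈ nbhd K U} < #{i | x i ∈ U}
    simp only [not_lt, card_univ, Fintype.card_fun, Fintype.card_fin] at this
    exact_mod_cast this
  linarith [card_filter_card_le_card_le_pow hU.disjoint_nbhd ht m]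

end Majority

lemma exists_one_le_inv_mul_add_mul_lt {u q : ℝ} (hq : 0 ≤ q) (hqu : q < u) :
    ∃ t : ℝ, 1 ≤ t ∧ u * t⁻¹ + q * t < u + q := by
  have hu : 0 < u := hq.trans_lt hqu
  refine ⟨2 * u / (u + q), ?_, ?_⟩
  · rw [le_div_iff₀ (by linarith)]
    linarith
  · rw [inv_div, ← sub_pos]
    have key : u + q - (u * ((u + q) / (2 * u)) + q * (2 * u / (u + q))) =
        (u - q) ^ 2 / (2 * (u + q)) := by
      field_simp
      ring
    rw [key]
    exact div_pos (pow_pos (sub_pos.2 hqu) 2) (by linarith)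

section Limit
variable {γ : Type*} [Fintype γ] [Nonempty γ]

lemma exists_iRatio_tensorPow_ge_inv_one_add_bRatio (K : SimpleGraph γ) :
    ∃ ρ : ℝ, 0 ≤ ρ ∧ ρ < 1 ∧
      ∀ k, (1 + bRatio K)⁻¹ * (1 - ρ ^ (k + 1)) ≤ iRatio (tensorPow K (k + 1)) := by
  obtain ⟨U, hne, hU, hb⟩ := exists_bRatio_eq K
  have hn : (Fintype.card γ : ℝ) = #U + #(nbhd K U) + #(U ∪ nbhd K U)ᶜ := by
    exact_mod_cast hU.card_add_card_nbhd_add_card_compl.symm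
  have hu : (0 : ℝ) < #U := by exact_mod_cast hne.card_pos
  refine ⟨#(U ∪ nbhd K U)ᶜ / Fintype.card γ, by positivity,
    (div_lt_one (by positivity)).2 (by linarith [show (0 : ℝ) ≤ #(nbhd K U) by positivity]),
    fun k => ?_⟩
  rw [hb, ← div_add_eq_inv_one_add_div hu.ne', iRatio_tensorPow, le_div_iff₀ (by positivity)]
  refine le_of_eq_of_le ?_ (hU.le_alphaNum_tensorPow k)
  rw [div_pow, mul_assoc, sub_mul, div_mul_cancel₀ _ (by positivity), one_mul]

lemma exists_iRatio_tensorPow_ge_one_sub {K : SimpleGraph γ} (hb : bRatio K < 1) :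
    ∃ ρ : ℝ, 0 ≤ ρ ∧ ρ < 1 ∧ ∀ k, 1 - ρ ^ (k + 1) ≤ iRatio (tensorPow K (k + 1)) := by
  obtain ⟨U, hne, hU, hbU⟩ := exists_bRatio_eq K
  have hn : (Fintype.card γ : ℝ) = #U + #(nbhd K U) + #(U ∪ nbhd K U)ᶜ := by
    exact_mod_cast hU.card_add_card_nbhd_add_card_compl.symm
  have hu : (0 : ℝ) < #U := by exact_mod_cast hne.card_pos
  rw [hbU, div_lt_one hu] at hb
  obtain ⟨t, ht, htlt⟩ := exists_one_le_inv_mul_add_mul_lt (by positivity) hb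
  refine ⟨(#U * t⁻¹ + #(nbhd K U) * t + #(U ∪ nbhd K U)ᶜ) / Fintype.card γ, by positivity,
    (div_lt_one (by positivity)).2 (by linarith), fun k => ?_⟩
  rw [iRatio_tensorPow, le_div_iff₀ (by positivity)]
  refine le_of_eq_of_le ?_ (hU.card_pow_sub_le_alphaNum_tensorPow ht (k + 1))
  rw [div_pow, sub_mul, div_mul_cancel₀ _ (by positivity), one_mul]

lemma exists_iRatio_tensorPow_ge_aStar (K : SimpleGraph γ) :
    ∃ ρ : ℝ, 0 ≤ ρ ∧ ρ < 1 ∧ ∀ k, aStar K * (1 - ρ ^ (k + 1)) ≤ iRatio (tensorPow K (k + 1)) := by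
  rw [aStar_eq_aStarOfBRatio, aStarOfBRatio]
  split_ifs with hb
  · exact exists_iRatio_tensorPow_ge_inv_one_add_bRatio K
  · simpa using exists_iRatio_tensorPow_ge_one_sub (not_le.1 hb)

theorem tendsto_iRatio_tensorPow (K : SimpleGraph γ) :
    Tendsto (fun k : ℕ => iRatio (tensorPow K (k + 1))) atTop (nhds (aStar K)) := by
  obtain ⟨ρ, hρ0, hρ1, hle⟩ := exists_iRatio_tensorPow_ge_aStar K
  have hlim : Tendsto (fun k : ℕ => aStar K * (1 - ρ ^ (k + 1))) atTop (nhds (aStar K)) := by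
    simpa using (((tendsto_pow_atTop_nhds_zero_of_lt_one hρ0 hρ1).comp
      (tendsto_add_atTop_nat 1)).const_sub 1).const_mul (aStar K)
  exact tendsto_of_tendsto_of_tendsto_of_le_of_le hlim tendsto_const_nhds hle
    (iRatio_tensorPow_le_aStar K)

end Limit

theorem stmt16 {α β : Type*} [Fintype α] [Fintype β] [Nonempty α] [Nonempty β]
    (G : SimpleGraph α) (H : SimpleGraph β) (LG LH : ℝ)
    (hG : Tendsto (fun k : ℕ => iRatio (tensorPow G (k + 1))) atTop (nhds LG))
    (hH : Tendsto (fun k : ℕ => iRatio (tensorPow H (k + 1))) atTop (nhds LH)) :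
    Tendsto (fun k : ℕ => iRatio (tensorPow (tensorProd G H) (k + 1))) atTop
      (nhds (max LG LH)) := by
  rw [tendsto_nhds_unique hG (tendsto_iRatio_tensorPow G),
    tendsto_nhds_unique hH (tendsto_iRatio_tensorPow H), ← aStar_tensorProd]
  exact tendsto_iRatio_tensorPow (tensorProd G H)
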